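/- Let m(x) = φ(x)/Φ(x) be the inverse Mill's ratio, where Φ and φ are the standard normal cumulative distribution function and density. Then m is differentiable with m'(x) = −m(x)(x + m(x)), and m'(x) > −1 for all x ∈ ℝ. -/

import Mathlib

/-!
With `φ' = -xφ` and `Φ' = φ`, the claim `m' > -1` is equivalent to positivity of
`h = Φ² - xφΦ - φ²`. One computes `h' = φ g` with `g = (1 + x²)Φ + xφ`, then `g' = 2p` with
`p = xΦ + φ`, and finally `p' = Φ > 0`. Since `Φ ≤ φ` near `-∞` and `φ` decays faster than any
power, `h`, `g` and `p` all tend to `0` at `-∞`; each has a positive derivative, hence is positive.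
-/

open MeasureTheory ProbabilityTheory Filter
open scoped ENNReal

/-- The standard normal cumulative distribution function `Φ`. -/
noncomputable def Phi (x : ℝ) : ℝ := ((gaussianReal 0 1) (Set.Iic x)).toReal

/-- The standard normal probability density function `φ`. -/
noncomputable def phiPDF (x : ℝ) : ℝ := gaussianPDFReal 0 1 x

/-- The joint law of `n` independent standard normal random variables. -/
noncomputable def stdGaussianPi (n : ℕ) : Measure (Fin n → ℝ) :=
  Measure.pi fun _ => gaussianReal 0 1

/-- The intraclass-correlation multivariate Gaussian vector `X ~ N(μ, Σ)` with
`Σ_{ij} = ρ + (1-ρ)δ_{ij}`, realized as `X_i = μ_i + √ρ Y_0 + √(1-ρ) Y_i` where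
`Y_0, …, Y_k` are independent standard normals (the coordinates of `ω`). -/
noncomputable def Xvec (ρ : ℝ) {k : ℕ} (μ : Fin k → ℝ) (i : Fin k) (ω : Fin (k+1) → ℝ) : ℝ :=
  μ i + Real.sqrt ρ * ω 0 + Real.sqrt (1-ρ) * ω i.succ

/-- The cumulative distribution function of `X* = max {X_1, …, X_k}`. -/
noncomputable def Fstar (ρ : ℝ) {k : ℕ} (μ : Fin k → ℝ) (x : ℝ) : ℝ :=
  (stdGaussianPi (k+1) {ω | (⨆ i, Xvec ρ μ i ω) ≤ x}).toReal

/-- The inverse Mill's ratio `m(x) = φ(x)/Φ(x)`. -/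
noncomputable def mills (x : ℝ) : ℝ := phiPDF x / Phi x

open Set Real Topology

lemma phiPDF_eq (x : ℝ) : phiPDF x = (√(2 * π))⁻¹ * exp (-(1 / 2) * x ^ 2) := by
  simp only [phiPDF, gaussianPDFReal, NNReal.coe_one, mul_one, sub_zero]
  ring_nf

lemma phiPDF_pos (x : ℝ) : 0 < phiPDF x := gaussianPDFReal_pos 0 1 x one_ne_zero

lemma integrable_phiPDF : Integrable phiPDF := integrable_gaussianPDFReal 0 1

lemma continuous_phiPDF : Continuous phiPDF := by
  simp only [funext phiPDF_eq]
  fun_prop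

lemma hasDerivAt_phiPDF (x : ℝ) : HasDerivAt phiPDF (-x * phiPDF x) x := by
  have h := (((hasDerivAt_pow 2 x).const_mul (-(1 / 2) : ℝ)).exp).const_mul (√(2 * π))⁻¹
  rw [← funext phiPDF_eq] at h
  refine h.congr_deriv ?_
  rw [phiPDF_eq]
  push_cast
  ring

lemma integrable_mul_phiPDF : Integrable fun x => x * phiPDF x := by
  simpa only [phiPDF_eq, mul_left_comm] using
    (integrable_mul_exp_neg_mul_sq (b := 1 / 2) (by norm_num)).const_mul (√(2 * π))⁻¹

lemma tendsto_pow_mul_phiPDF_atBot (n : ℕ) :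
    Tendsto (fun x => x ^ n * phiPDF x) atBot (𝓝 0) := by
  have h := ((tendsto_rpow_abs_mul_exp_neg_mul_sq_cocompact (a := 1 / 2) (by norm_num) n).mono_left
    atBot_le_cocompact).const_mul (√(2 * π))⁻¹
  rw [mul_zero] at h
  refine tendsto_zero_iff_norm_tendsto_zero.mpr (h.congr fun x => ?_)
  rw [norm_mul, norm_pow, norm_of_nonneg (phiPDF_pos x).le, phiPDF_eq, Real.norm_eq_abs,
    rpow_natCast]
  ring

lemma Phi_eq_integral (x : ℝ) : Phi x = ∫ t in Iic x, phiPDF t := by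
  rw [Phi, gaussianReal_apply_eq_integral 0 one_ne_zero,
    ENNReal.toReal_ofReal (integral_nonneg fun t => gaussianPDFReal_nonneg 0 1 t)]
  rfl

lemma hasDerivAt_Phi (x : ℝ) : HasDerivAt Phi (phiPDF x) x := by
  have h := (intervalIntegral.integral_hasDerivAt_right (a := 0) (b := x)
    integrable_phiPDF.intervalIntegrable (continuous_phiPDF.stronglyMeasurableAtFilter _ _)
    continuous_phiPDF.continuousAt).const_add (Phi 0)
  refine h.congr_of_eventuallyEq (Eventually.of_forall fun y => ?_)
  dsimp only
  rw [Phi_eq_integral, Phi_eq_integral, ← intervalIntegral.integral_Iic_sub_Iic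
    integrable_phiPDF.integrableOn integrable_phiPDF.integrableOn]
  ring

lemma Phi_pos (x : ℝ) : 0 < Phi x := by
  rw [Phi_eq_integral, setIntegral_pos_iff_support_of_nonneg_ae
    (Eventually.of_forall fun t => (phiPDF_pos t).le) integrable_phiPDF.integrableOn,
    show Function.support phiPDF = univ from eq_univ_of_forall fun t => (phiPDF_pos t).ne',
    univ_inter]
  simp

-- On `(-∞, -1]`, `φ ≤ -tφ = φ'`, whose integral over `(-∞, x]` is `φ x`.
lemma Phi_le_phiPDF {x : ℝ} (hx : x ≤ -1) : Phi x ≤ phiPDF x := by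
  have hint : IntegrableOn (fun t => -t * phiPDF t) (Iic x) := by
    simpa only [Pi.neg_def, neg_mul] using integrable_mul_phiPDF.neg.integrableOn
  calc Phi x = ∫ t in Iic x, phiPDF t := Phi_eq_integral x
    _ ≤ ∫ t in Iic x, -t * phiPDF t :=
      setIntegral_mono_on integrable_phiPDF.integrableOn hint measurableSet_Iic fun t ht =>
        le_mul_of_one_le_left (phiPDF_pos t).le (by linarith [ht.out])
    _ = phiPDF x := by
      rw [integral_Iic_of_hasDerivAt_of_tendsto' (fun t _ => hasDerivAt_phiPDF t) hint
        (by simpa using tendsto_pow_mul_phiPDF_atBot 0), sub_zero]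

lemma tendsto_pow_mul_Phi_atBot (n : ℕ) :
    Tendsto (fun x => x ^ n * Phi x) atBot (𝓝 0) := by
  refine squeeze_zero_norm' ?_
    (tendsto_zero_iff_norm_tendsto_zero.mp (tendsto_pow_mul_phiPDF_atBot n))
  filter_upwards [eventually_le_atBot (-1)] with x hx
  rw [norm_mul, norm_mul, norm_of_nonneg (Phi_pos x).le, norm_of_nonneg (phiPDF_pos x).le]
  exact mul_le_mul_of_nonneg_left (Phi_le_phiPDF hx) (norm_nonneg _)

lemma pos_of_hasDerivAt_pos_of_tendsto_atBot {f f' : ℝ → ℝ} (hf : ∀ x, HasDerivAt f (f' x) x)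
    (hf' : ∀ x, 0 < f' x) (hlim : Tendsto f atBot (𝓝 0)) (x : ℝ) : 0 < f x := by
  have hmono : StrictMono f := strictMono_of_deriv_pos fun y => (hf y).deriv ▸ hf' y
  exact (hmono.monotone.le_of_tendsto hlim (x - 1)).trans_lt (hmono (by linarith))

lemma mul_Phi_add_phiPDF_pos (x : ℝ) : 0 < x * Phi x + phiPDF x := by
  refine pos_of_hasDerivAt_pos_of_tendsto_atBot (f := fun y => y * Phi y + phiPDF y)
    (fun y => ?_) Phi_pos ?_ x
  · exact (((hasDerivAt_id' y).mul (hasDerivAt_Phi y)).add (hasDerivAt_phiPDF y)).congr_deriv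
      (by ring)
  · simpa using (tendsto_pow_mul_Phi_atBot 1).add (tendsto_pow_mul_phiPDF_atBot 0)

lemma one_add_sq_mul_Phi_add_mul_phiPDF_pos (x : ℝ) :
    0 < (1 + x ^ 2) * Phi x + x * phiPDF x := by
  refine pos_of_hasDerivAt_pos_of_tendsto_atBot
    (f := fun y => (1 + y ^ 2) * Phi y + y * phiPDF y) (f' := fun y => 2 * (y * Phi y + phiPDF y))
    (fun y => ?_) (fun y => by linarith [mul_Phi_add_phiPDF_pos y]) ?_ x
  · refine ((((hasDerivAt_pow 2 y).const_add 1).mul (hasDerivAt_Phi y)).add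
      ((hasDerivAt_id' y).mul (hasDerivAt_phiPDF y))).congr_deriv ?_
    push_cast
    ring
  · simpa [add_mul] using ((tendsto_pow_mul_Phi_atBot 0).add (tendsto_pow_mul_Phi_atBot 2)).add
      (tendsto_pow_mul_phiPDF_atBot 1)

lemma Phi_sq_sub_mul_phiPDF_mul_Phi_sub_phiPDF_sq_pos (x : ℝ) :
    0 < Phi x ^ 2 - x * phiPDF x * Phi x - phiPDF x ^ 2 := by
  refine pos_of_hasDerivAt_pos_of_tendsto_atBot
    (f := fun y => Phi y ^ 2 - y * phiPDF y * Phi y - phiPDF y ^ 2)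
    (f' := fun y => phiPDF y * ((1 + y ^ 2) * Phi y + y * phiPDF y)) (fun y => ?_)
    (fun y => mul_pos (phiPDF_pos y) (one_add_sq_mul_Phi_add_mul_phiPDF_pos y)) ?_ x
  · refine ((((hasDerivAt_Phi y).pow 2).sub (((hasDerivAt_id' y).mul (hasDerivAt_phiPDF y)).mul
      (hasDerivAt_Phi y))).sub ((hasDerivAt_phiPDF y).pow 2)).congr_deriv ?_
    simp only [Pi.mul_apply]
    push_cast
    ring
  · have hPhi := tendsto_pow_mul_Phi_atBot 0
    have hphi := tendsto_pow_mul_phiPDF_atBot 0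
    simp only [pow_zero, one_mul] at hPhi hphi
    simpa [sq] using ((hPhi.mul hPhi).sub ((tendsto_pow_mul_phiPDF_atBot 1).mul hPhi)).sub
      (hphi.mul hphi)

lemma hasDerivAt_mills (x : ℝ) : HasDerivAt mills (-(mills x) * (x + mills x)) x := by
  have hPhi := (Phi_pos x).ne'
  refine ((hasDerivAt_phiPDF x).div (hasDerivAt_Phi x) hPhi).congr_deriv ?_
  simp only [mills]
  field_simp
  ring

lemma neg_one_lt_neg_mills_mul_add_mills (x : ℝ) : (-1 : ℝ) < -(mills x) * (x + mills x) := by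
  have hPhi := (Phi_pos x).ne'
  have h : -(mills x) * (x + mills x) + 1
      = (Phi x ^ 2 - x * phiPDF x * Phi x - phiPDF x ^ 2) / Phi x ^ 2 := by
    simp only [mills]
    field_simp
    ring
  linarith [div_pos (Phi_sq_sub_mul_phiPDF_mul_Phi_sub_phiPDF_sq_pos x) (pow_pos (Phi_pos x) 2)]

/-- The inverse Mill's ratio is differentiable with `m'(x) = -m(x)(x + m(x))`,
and `m'(x) > -1` for all `x`. -/
theorem stmt18 :
    ∀ x : ℝ, HasDerivAt mills (-(mills x) * (x + mills x)) x ∧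
      (-1 : ℝ) < -(mills x) * (x + mills x) :=
  fun x => ⟨hasDerivAt_mills x, neg_one_lt_neg_mills_mul_add_mills x⟩
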